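/- Let G be a finite graph containing a pendant vertex u (a vertex of degree 1) with unique neighbor v. Then v is rare in G: at most half of the maximal stable sets of G contain v. -/
import Mathlib


/-- A stable (independent) set of vertices. -/
def IsStable {V : Type*} (G : SimpleGraph V) (S : Finset V) : Prop :=
  ∀ a ∈ S, ∀ b ∈ S, ¬ G.Adj a b

/-- A maximal stable set. -/
def IsMaxStable {V : Type*} (G : SimpleGraph V) (S : Finset V) : Prop :=
  IsStable G S ∧ ∀ T : Finset V, IsStable G T → S ⊆ T → S = T

/-- The number of maximal stable sets of `G`. -/
noncomputable def numMaxStable {V : Type*} (G : SimpleGraph V) : ℕ :=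
  Set.ncard {S : Finset V | IsMaxStable G S}

/-- The number of maximal stable sets of `G` containing `v`. -/
noncomputable def numMaxStableCont {V : Type*} (G : SimpleGraph V) (v : V) : ℕ :=
  Set.ncard {S : Finset V | IsMaxStable G S ∧ v ∈ S}

/-- The neighborhood of a set of vertices. -/
def nbhdSet {V : Type*} (G : SimpleGraph V) (P : Set V) : Set V :=
  {w | ∃ p ∈ P, G.Adj p w}

/-- A pendant vertex: a vertex of degree exactly 1. -/
def IsPendant {V : Type*} (G : SimpleGraph V) (u : V) : Prop :=
  ∃! w, G.Adj u w

/-- A 2-layered vertex: every neighbor is adjacent to some pendant vertex. -/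
def TwoLayered {V : Type*} (G : SimpleGraph V) (v : V) : Prop :=
  ∀ w, G.Adj v w → ∃ p, G.Adj w p ∧ IsPendant G p

/-- A maximal stable set of the subgraph of `G` induced on the vertex set `A`. -/
def IsMaxStableIn {V : Type*} (G : SimpleGraph V) (A : Set V) (S : Finset V) : Prop :=
  ↑S ⊆ A ∧ IsStable G S ∧
    ∀ T : Finset V, ↑T ⊆ A → IsStable G T → S ⊆ T → S = T

/-- Every stable set extends to a maximal stable set. -/
lemma exists_maxStable_superset {V : Type*} [Fintype V] [DecidableEq V] (G : SimpleGraph V)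
    (S : Finset V) (hS : IsStable G S) : ∃ T, IsMaxStable G T ∧ S ⊆ T := by
  classical
  let 𝒮 : Finset (Finset V) := Finset.univ.filter (fun T => IsStable G T ∧ S ⊆ T)
  have hSmem : S ∈ 𝒮 := by simp [𝒮, hS]
  obtain ⟨T, hT, hmax⟩ := Finset.exists_max_image 𝒮 (fun T => T.card) ⟨S, hSmem⟩
  simp only [𝒮, Finset.mem_filter, Finset.mem_univ, true_and] at hT
  refine ⟨T, ⟨hT.1, fun T' hT' hsub => ?_⟩, hT.2⟩
  have hT'mem : T' ∈ 𝒮 := by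
    simp [𝒮, hT', hT.2.trans hsub]
  exact Finset.eq_of_subset_of_card_le hsub (hmax T' hT'mem)

theorem stmt_7 {V : Type*} [Fintype V] [DecidableEq V] (G : SimpleGraph V) (u v : V)
    (huv : G.Adj u v) (hdeg : ∀ w, G.Adj u w → w = v) :
    2 * numMaxStableCont G v ≤ numMaxStable G := by
  classical
  -- a maximal stable set not containing v must contain u
  have hucont : ∀ S : Finset V, IsMaxStable G S → v ∉ S → u ∈ S := by
    intro S hS hv
    by_contra hu
    have hstab : IsStable G (insert u S) := by
      intro a ha b hb hab
      rcases Finset.mem_insert.mp ha with hau | ha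
      · subst hau
        rcases Finset.mem_insert.mp hb with hbu | hb
        · subst hbu; exact G.irrefl hab
        · exact hv ((hdeg b hab) ▸ hb)
      · rcases Finset.mem_insert.mp hb with hbu | hb
        · exact hv ((hdeg a (hbu ▸ hab).symm) ▸ ha)
        · exact hS.1 a ha b hb hab
    have := hS.2 _ hstab (Finset.subset_insert _ _)
    exact hu (this ▸ Finset.mem_insert_self u S)
  have hvnotu : ∀ S : Finset V, IsMaxStable G S → v ∈ S → u ∉ S := by
    intro S hS hv hu
    exact hS.1 u hu v hv huv
  -- the injection
  set A : Set (Finset V) := {S : Finset V | IsMaxStable G S ∧ v ∈ S} with hA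
  set B : Set (Finset V) := {S : Finset V | IsMaxStable G S ∧ u ∈ S} with hB
  have hstab' : ∀ S ∈ A, IsStable G (insert u (S.erase v)) := by
    intro S hS a ha b hb hab
    rcases Finset.mem_insert.mp ha with hau | ha
    · subst hau
      rcases Finset.mem_insert.mp hb with hbu | hb
      · subst hbu; exact G.irrefl hab
      · exact (Finset.ne_of_mem_erase hb) (hdeg b hab)
    · rcases Finset.mem_insert.mp hb with hbu | hb
      · exact (Finset.ne_of_mem_erase ha) (hdeg a (hbu ▸ hab).symm)
      · exact hS.1.1 a (Finset.mem_of_mem_erase ha) b (Finset.mem_of_mem_erase hb) hab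
  have hex : ∀ S ∈ A, ∃ T, IsMaxStable G T ∧ insert u (S.erase v) ⊆ T :=
    fun S hS => exists_maxStable_superset G _ (hstab' S hS)
  choose f hf using hex
  have hfB : ∀ S (hS : S ∈ A), f S hS ∈ B := by
    intro S hS
    exact ⟨(hf S hS).1, (hf S hS).2 (Finset.mem_insert_self _ _)⟩
  -- injectivity
  have hinj : ∀ S₁ (h₁ : S₁ ∈ A), ∀ S₂ (h₂ : S₂ ∈ A), f S₁ h₁ = f S₂ h₂ → S₁ = S₂ := by
    intro S₁ h₁ S₂ h₂ heq
    set T := f S₁ h₁ with hT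
    have hsub₁ : S₁.erase v ⊆ T := (Finset.insert_subset_iff.mp (hf S₁ h₁).2).2
    have hsub₂ : S₂.erase v ⊆ T := heq ▸ (Finset.insert_subset_iff.mp (hf S₂ h₂).2).2
    have hTstab := (hf S₁ h₁).1.1
    have hstabU : IsStable G (S₁ ∪ S₂) := by
      intro a ha b hb hab
      rcases Finset.mem_union.mp ha with ha | ha <;>
        rcases Finset.mem_union.mp hb with hb | hb
      · exact h₁.1.1 a ha b hb hab
      · by_cases hav : a = v
        · subst hav; exact h₂.1.1 a h₂.2 b hb hab
        · by_cases hbv : b = v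
          · subst hbv; exact h₁.1.1 a ha b h₁.2 hab
          · exact hTstab a (hsub₁ (Finset.mem_erase.mpr ⟨hav, ha⟩))
              b (hsub₂ (Finset.mem_erase.mpr ⟨hbv, hb⟩)) hab
      · by_cases hav : a = v
        · subst hav; exact h₁.1.1 a h₁.2 b hb hab
        · by_cases hbv : b = v
          · subst hbv; exact h₂.1.1 a ha b h₂.2 hab
          · exact hTstab a (hsub₂ (Finset.mem_erase.mpr ⟨hav, ha⟩))
              b (hsub₁ (Finset.mem_erase.mpr ⟨hbv, hb⟩)) hab
      · exact h₂.1.1 a ha b hb hab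
    have e₁ : S₁ = S₁ ∪ S₂ := h₁.1.2 _ hstabU Finset.subset_union_left
    have e₂ : S₂ = S₁ ∪ S₂ := h₂.1.2 _ hstabU Finset.subset_union_right
    exact e₁.trans e₂.symm
  -- counting
  have hle : A.ncard ≤ B.ncard := by
    let g : Finset V → Finset V := fun S => if h : S ∈ A then f S h else ∅
    refine Set.ncard_le_ncard_of_injOn g ?_ ?_ (Set.toFinite B)
    · intro S hS
      simp only [g, dif_pos hS]
      exact hfB S hS
    · intro S₁ h₁ S₂ h₂ heq
      simp only [g, dif_pos h₁, dif_pos h₂] at heq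
      exact hinj S₁ h₁ S₂ h₂ heq
  have hdisj : Disjoint A B := by
    rw [Set.disjoint_left]
    rintro S ⟨hSm, hSv⟩ ⟨_, hSu⟩
    exact hvnotu S hSm hSv hSu
  have hunion : {S : Finset V | IsMaxStable G S} = A ∪ B := by
    ext S
    simp only [Set.mem_setOf_eq, Set.mem_union, hA, hB]
    constructor
    · intro hS
      by_cases hv : v ∈ S
      · exact Or.inl ⟨hS, hv⟩
      · exact Or.inr ⟨hS, hucont S hS hv⟩
    · rintro (⟨hS, _⟩ | ⟨hS, _⟩) <;> exact hS
  have : numMaxStable G = A.ncard + B.ncard := by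
    rw [numMaxStable, hunion, Set.ncard_union_eq hdisj (Set.toFinite A) (Set.toFinite B)]
  have hAeq : numMaxStableCont G v = A.ncard := rfl
  rw [this, hAeq]
  omega
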